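/- For any odd positive integers w1, w2, w3, any complex number y1, and any nonnegative integer n, the quantity w_{σ(1)}^n Σ_{k=0}^{n} (n choose k) Σ_{a=0}^{w_{σ(1)} d − 1} (−1)^a χ(a) E_{k,χ}(w_{σ(2)} y1 + (w_{σ(2)}/w_{σ(1)}) a) T_{n−k}(w_{σ(3)} d − 1, χ) w_{σ(2)}^{n−k} w_{σ(3)}^{k} is the same for all six permutations σ of {1,2,3}; for example w1^n Σ_{k=0}^{n} (n choose k) Σ_{a=0}^{w1 d − 1} (−1)^a χ(a) E_{k,χ}(w2 y1 + (w2/w1) a) T_{n−k}(w3 d − 1, χ) w2^{n−k} w3^{k} = w3^n Σ_{k=0}^{n} (n choose k) Σ_{a=0}^{w3 d − 1} (−1)^a χ(a) E_{k,χ}(w2 y1 + (w2/w3) a) T_{n−k}(w1 d − 1, χ) w2^{n−k} w1^{k}. -/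

import Mathlib

/-!
With `Q = e^{dt} + 1` and `A_N = Σ_{a<N} (-1)^a χ(a) e^{at}`, the quantity attached to `(u, v, w)`
is `n!` times the `n`-th coefficient of
`F(u,v,w) = (Σ_{a<ud} (-1)^a χ(a) 𝓔(vy + va/u))(uwt) · A_{wd}(uvt)`, where `𝓔(x)` is the
exponential generating series of `E_{k,χ}(x)`. For odd `m` and `d`, periodicity of `χ` and
`(Σ_{j<m} (-X)^j)(X + 1) = X^m + 1` give `A_{md}(t) Q(t) = (e^{mdt} + 1) A_d(t)`. Together with the
defining relation of the Euler polynomials this shows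
`F(u,v,w) · Q(uvt) Q(uwt) Q(vwt) = 2 e^{uvwyt} (e^{uvwdt} + 1)² A_d(uvt) A_d(uwt) A_d(vwt)`,
which is symmetric in `u, v, w`. Cancelling the nonzero factor `Q(uvt) Q(uwt) Q(vwt)` gives
invariance under the transpositions `(u v)` and `(v w)`, which generate `S₃`.
-/

open Finset

/-- The formal exponential power series `e^{ct} = Σ cⁿ tⁿ/n!` in `ℂ[[t]]`. -/
noncomputable def expPS (c : ℂ) : PowerSeries ℂ :=
  PowerSeries.mk fun n => c ^ n / n.factorial

/-- `Σ_{a=0}^{d-1} (-1)^a χ(a) e^{at}` as a formal power series. -/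
noncomputable def altSum (χ : ℤ → ℂ) (d : ℕ) : PowerSeries ℂ :=
  ∑ a ∈ Finset.range d, ((-1 : ℂ) ^ a * χ (a : ℤ)) • expPS (a : ℂ)

/-- `E` is the family of generalized Euler polynomials attached to `χ` mod `d`:
`(Σ_{n≥0} E_{n,χ}(x) tⁿ/n!) · (e^{dt}+1) = 2 e^{xt} · Σ_{a=0}^{d-1} (-1)^a χ(a) e^{at}`. -/
def IsGenEuler (d : ℕ) (χ : ℤ → ℂ) (E : ℕ → ℂ → ℂ) : Prop :=
  ∀ x : ℂ, (PowerSeries.mk fun n => E n x / n.factorial) * (expPS (d : ℂ) + 1)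
    = (2 : PowerSeries ℂ) * expPS x * altSum χ d

/-- The alternating generalized power sum `T_k(n,χ) = Σ_{a=0}^{n} (-1)^a χ(a) a^k`
(with the convention `0^0 = 1`). -/
noncomputable def altPowSum (χ : ℤ → ℂ) (k n : ℕ) : ℂ :=
  ∑ a ∈ Finset.range (n + 1), (-1 : ℂ) ^ a * χ (a : ℤ) * (a : ℂ) ^ k

/-- The multinomial coefficient `(k+l+m)! / (k! l! m!)`. -/
def multinom (k l m : ℕ) : ℕ :=
  (k + l + m).factorial / (k.factorial * l.factorial * m.factorial)

open PowerSeries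

lemma expPS_eq_rescale_exp (c : ℂ) : expPS c = rescale c (exp ℂ) := by
  ext n
  simp [expPS, coeff_rescale, coeff_exp, div_eq_mul_inv]

lemma expPS_mul_expPS (a b : ℂ) : expPS a * expPS b = expPS (a + b) := by
  simp only [expPS_eq_rescale_exp, exp_mul_exp_eq_exp_add]

lemma rescale_expPS (c x : ℂ) : rescale c (expPS x) = expPS (x * c) := by
  rw [expPS_eq_rescale_exp, rescale_rescale, ← expPS_eq_rescale_exp]

lemma expPS_zero : expPS 0 = 1 := by
  rw [expPS_eq_rescale_exp, rescale_zero]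
  simp

lemma expPS_pow (c : ℂ) (m : ℕ) : expPS c ^ m = expPS (m * c) := by
  induction m with
  | zero => simp [expPS_zero]
  | succ m ih => rw [pow_succ, ih, expPS_mul_expPS]; congr 1; push_cast; ring

lemma sum_range_mul_eq_sum_sum {M : Type*} [AddCommMonoid M] (f : ℕ → M) (m d : ℕ) :
    ∑ a ∈ Finset.range (m * d), f a
      = ∑ j ∈ Finset.range m, ∑ r ∈ Finset.range d, f (j * d + r) := by
  induction m with
  | zero => simp
  | succ m ih => rw [Nat.succ_mul, Finset.sum_range_add, ih, Finset.sum_range_succ]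

lemma geom_sum_neg_mul_add_one {R : Type*} [CommRing R] (x : R) {m : ℕ} (hm : Odd m) :
    (∑ j ∈ Finset.range m, (-x) ^ j) * (x + 1) = x ^ m + 1 := by
  have h := geom_sum_mul_neg (-x) m
  rw [hm.neg_pow, sub_neg_eq_add, sub_neg_eq_add, add_comm 1 x] at h
  rw [h, add_comm]

section AltSum

variable {χ : ℤ → ℂ} {d : ℕ}

lemma altSum_mul_eq_geom_sum_mul (hd : Odd d) (hper : Function.Periodic χ d) (m : ℕ) :
    altSum χ (m * d) = (∑ j ∈ Finset.range m, (-expPS d) ^ j) * altSum χ d := by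
  rw [altSum, altSum, sum_range_mul_eq_sum_sum, Finset.sum_mul]
  refine Finset.sum_congr rfl fun j _ => ?_
  rw [Finset.mul_sum]
  refine Finset.sum_congr rfl fun r _ => ?_
  have hsign : (-1 : ℂ) ^ (j * d + r) = (-1) ^ j * (-1) ^ r := by
    rw [pow_add, mul_comm j, pow_mul, hd.neg_one_pow]
  have hχ : χ ((j * d + r : ℕ) : ℤ) = χ r := by
    rw [← hper.nat_mul j r]; congr 1; push_cast; ring
  have hexp : expPS ((j * d + r : ℕ) : ℂ) = expPS d ^ j * expPS r := by
    rw [expPS_pow, expPS_mul_expPS]; congr 1; push_cast; ring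
  rw [hsign, hχ, hexp, neg_pow]
  simp only [smul_eq_C_mul, map_mul, map_pow, map_neg, map_one]
  ring

lemma altSum_mul_mul_expPS_add_one (hd : Odd d) (hper : Function.Periodic χ d) {m : ℕ}
    (hm : Odd m) : altSum χ (m * d) * (expPS d + 1) = (expPS (m * d) + 1) * altSum χ d := by
  rw [altSum_mul_eq_geom_sum_mul hd hper, mul_right_comm, geom_sum_neg_mul_add_one _ hm, expPS_pow]

lemma rescale_altSum (N : ℕ) (c : ℂ) :
    rescale c (altSum χ N) = ∑ a ∈ Finset.range N, ((-1 : ℂ) ^ a * χ a) • expPS (a * c) := by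
  ext n
  simp only [altSum, expPS, coeff_rescale, map_sum, coeff_smul, coeff_mk,
    smul_eq_mul, mul_pow]
  exact Finset.sum_congr rfl fun a _ => by ring

lemma coeff_altSum {N : ℕ} (hN : 0 < N) (k : ℕ) :
    coeff k (altSum χ N) = altPowSum χ k (N - 1) / k.factorial := by
  simp only [altSum, altPowSum, expPS, Nat.sub_add_cancel hN, Finset.sum_div, map_sum,
    coeff_smul, coeff_mk, smul_eq_mul, mul_div_assoc]

end AltSum

lemma IsGenEuler.sum_smul_mul_expPS_add_one {d : ℕ} {χ : ℤ → ℂ} {E : ℕ → ℂ → ℂ}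
    (hE : IsGenEuler d χ E) (N : ℕ) (x c : ℂ) :
    (∑ a ∈ Finset.range N, ((-1 : ℂ) ^ a * χ a) • mk fun k => E k (x + c * a) / k.factorial)
        * (expPS d + 1)
      = 2 * expPS x * rescale c (altSum χ N) * altSum χ d := by
  rw [rescale_altSum, Finset.sum_mul, Finset.mul_sum, Finset.sum_mul]
  refine Finset.sum_congr rfl fun a _ => ?_
  rw [smul_mul_assoc, hE, ← expPS_mul_expPS, mul_comm c]
  simp only [smul_eq_C_mul]
  ring

noncomputable def tripleGenFun (d : ℕ) (χ : ℤ → ℂ) (E : ℕ → ℂ → ℂ) (y : ℂ) (u v w : ℕ) :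
    PowerSeries ℂ :=
  rescale ((u : ℂ) * w) (∑ a ∈ Finset.range (u * d),
      ((-1 : ℂ) ^ a * χ a) • mk fun k => E k (v * y + v / u * a) / k.factorial)
    * rescale ((u : ℂ) * v) (altSum χ (w * d))

section TripleGenFun

variable {d : ℕ} {χ : ℤ → ℂ} {E : ℕ → ℂ → ℂ} {y : ℂ} {u v w : ℕ}

lemma triple_sum_eq_factorial_mul_coeff (hwd : 0 < w * d) (n : ℕ) :
    (u : ℂ) ^ n * ∑ k ∈ Finset.range (n + 1), (n.choose k : ℂ) *
        (∑ a ∈ Finset.range (u * d), (-1 : ℂ) ^ a * χ a * E k (v * y + v / u * a)) *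
        altPowSum χ (n - k) (w * d - 1) * (v : ℂ) ^ (n - k) * (w : ℂ) ^ k
      = n.factorial * coeff n (tripleGenFun d χ E y u v w) := by
  rw [tripleGenFun, coeff_mul, Finset.Nat.sum_antidiagonal_eq_sum_range_succ_mk, Finset.mul_sum,
    Finset.mul_sum]
  refine Finset.sum_congr rfl fun k hk => ?_
  have hkn : k ≤ n := Nat.lt_succ_iff.mp (Finset.mem_range.mp hk)
  simp only [coeff_rescale, coeff_altSum hwd, map_sum, coeff_smul, coeff_mk, smul_eq_mul]
  obtain ⟨m, rfl⟩ := Nat.exists_eq_add_of_le hkn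
  rw [Nat.add_sub_cancel_left, Nat.cast_choose ℂ hkn, Nat.add_sub_cancel_left, ← Finset.mul_sum]
  simp only [mul_div_assoc', ← Finset.sum_div]
  field_simp
  ring

lemma tripleGenFun_mul (hd : Odd d) (hper : Function.Periodic χ d) (hE : IsGenEuler d χ E)
    (hu : Odd u) (hw : Odd w) :
    tripleGenFun d χ E y u v w * (rescale ((u : ℂ) * v) (expPS d + 1) *
        rescale ((u : ℂ) * w) (expPS d + 1) * rescale ((v : ℂ) * w) (expPS d + 1))
      = 2 * expPS (y * (u * v * w)) * (expPS (d * (u * v * w)) + 1) ^ 2 *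
          (rescale ((u : ℂ) * v) (altSum χ d) * rescale ((u : ℂ) * w) (altSum χ d) *
            rescale ((v : ℂ) * w) (altSum χ d)) := by
  have hu0 : (u : ℂ) ≠ 0 := Nat.cast_ne_zero.mpr hu.pos.ne'
  have hS := hE.sum_smul_mul_expPS_add_one (u * d) (v * y) (v / u)
  have hU := altSum_mul_mul_expPS_add_one hd hper hu
  have hW := altSum_mul_mul_expPS_add_one hd hper hw
  calc _ = rescale ((u : ℂ) * w) ((∑ a ∈ Finset.range (u * d), ((-1 : ℂ) ^ a * χ a) •
              mk fun k => E k (v * y + v / u * a) / k.factorial) * (expPS d + 1)) *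
            rescale ((v : ℂ) * w) (expPS d + 1) *
            rescale ((u : ℂ) * v) (altSum χ (w * d) * (expPS d + 1)) := by
        rw [tripleGenFun, map_mul, map_mul]; ring
    _ = 2 * expPS (v * y * (u * w)) * rescale ((u : ℂ) * w) (altSum χ d) *
          rescale ((v : ℂ) * w) (altSum χ (u * d) * (expPS d + 1)) *
          rescale ((u : ℂ) * v) ((expPS (w * d) + 1) * altSum χ d) := by
        rw [hS, hW]
        simp only [map_mul, map_ofNat, rescale_expPS, rescale_rescale,
          show (v : ℂ) / u * (u * w) = v * w by field_simp]
        ring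
    _ = _ := by
        rw [hU]
        simp only [map_mul, map_add, map_one, rescale_expPS]
        ring_nf

lemma rescale_expPS_add_one_ne_zero (c x : ℂ) : rescale c (expPS x + 1) ≠ 0 := by
  intro h
  have h0 := congrArg constantCoeff h
  simp [expPS, ← coeff_zero_eq_constantCoeff] at h0

lemma tripleGenFun_swap_left (hd : Odd d) (hper : Function.Periodic χ d)
    (hE : IsGenEuler d χ E) (hu : Odd u) (hv : Odd v) (hw : Odd w) :
    tripleGenFun d χ E y u v w = tripleGenFun d χ E y v u w := by
  have hM := rescale_expPS_add_one_ne_zero (x := d)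
  have h := tripleGenFun_mul (y := y) (v := v) hd hper hE hu hw
  have h' := tripleGenFun_mul (y := y) (v := u) hd hper hE hv hw
  rw [mul_comm (v : ℂ) u] at h'
  exact mul_right_cancel₀ (mul_ne_zero (mul_ne_zero (hM (u * v)) (hM (u * w))) (hM (v * w)))
    (by linear_combination h - h')

lemma tripleGenFun_swap_right (hd : Odd d) (hper : Function.Periodic χ d)
    (hE : IsGenEuler d χ E) (hu : Odd u) (hv : Odd v) (hw : Odd w) :
    tripleGenFun d χ E y u v w = tripleGenFun d χ E y u w v := by
  have hM := rescale_expPS_add_one_ne_zero (x := d)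
  have h := tripleGenFun_mul (y := y) (v := v) hd hper hE hu hw
  have h' := tripleGenFun_mul (y := y) (v := w) hd hper hE hu hv
  rw [mul_right_comm (u : ℂ) w v, mul_comm (w : ℂ) v] at h'
  exact mul_right_cancel₀ (mul_ne_zero (mul_ne_zero (hM (u * v)) (hM (u * w))) (hM (v * w)))
    (by linear_combination h - h')

end TripleGenFun

lemma fin_three_perm_args_eq {α β : Type*} (f : α → α → α → β)
    (h01 : ∀ a b c, f a b c = f b a c) (h12 : ∀ a b c, f a b c = f a c b) (x : Fin 3 → α)
    (σ : Equiv.Perm (Fin 3)) : f (x (σ 0)) (x (σ 1)) (x (σ 2)) = f (x 0) (x 1) (x 2) := by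
  induction σ using Submonoid.induction_of_closure_eq_top_right
    (Equiv.Perm.mclosure_swap_castSucc_succ 2) with
  | one => rfl
  | mul_right τ _ hs ih =>
    obtain ⟨i, rfl⟩ := hs
    fin_cases i
    · change f (x (τ 1)) (x (τ 0)) (x (τ 2)) = _
      rw [h01, ih]
    · change f (x (τ 0)) (x (τ 2)) (x (τ 1)) = _
      rw [h12, ih]

theorem stmt_4_general (d : ℕ) (hd : Odd d) (χ : ℤ → ℂ)
    (hper : ∀ a : ℤ, χ (a + d) = χ a)
    (E : ℕ → ℂ → ℂ) (hE : IsGenEuler d χ E)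
    (w : Fin 3 → ℕ) (hwodd : ∀ i, Odd (w i))
    (y1 : ℂ) (n : ℕ) (σ : Equiv.Perm (Fin 3)) :
    ((w (σ 0) : ℂ) ^ n * ∑ k ∈ range (n + 1),
      (n.choose k : ℂ) *
        (∑ a ∈ range (w (σ 0) * d), (-1 : ℂ) ^ a * χ (a : ℤ) *
          E k ((w (σ 1) : ℂ) * y1 + (w (σ 1) : ℂ) / (w (σ 0) : ℂ) * (a : ℂ))) *
        altPowSum χ (n - k) (w (σ 2) * d - 1) *
        (w (σ 1) : ℂ) ^ (n - k) * (w (σ 2) : ℂ) ^ k)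
    = (w 0 : ℂ) ^ n * ∑ k ∈ range (n + 1),
      (n.choose k : ℂ) *
        (∑ a ∈ range (w 0 * d), (-1 : ℂ) ^ a * χ (a : ℤ) *
          E k ((w 1 : ℂ) * y1 + (w 1 : ℂ) / (w 0 : ℂ) * (a : ℂ))) *
        altPowSum χ (n - k) (w 2 * d - 1) *
        (w 1 : ℂ) ^ (n - k) * (w 2 : ℂ) ^ k := by
  have hwd (i : Fin 3) : 0 < w i * d := Nat.mul_pos (hwodd i).pos hd.pos
  rw [triple_sum_eq_factorial_mul_coeff (hwd _), triple_sum_eq_factorial_mul_coeff (hwd _)]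
  exact congrArg (fun F => (n.factorial : ℂ) * coeff n F)
    (fin_three_perm_args_eq (fun a b c : {m : ℕ // Odd m} => tripleGenFun d χ E y1 a b c)
      (fun a b c => tripleGenFun_swap_left hd hper hE a.2 b.2 c.2)
      (fun a b c => tripleGenFun_swap_right hd hper hE a.2 b.2 c.2)
      (fun i => ⟨w i, hwodd i⟩) σ)

/-- Theorem 5: the quantity
`w₁ⁿ Σ_k C(n,k) Σ_{a=0}^{w₁d-1} (-1)^a χ(a) E_{k,χ}(w₂y₁ + (w₂/w₁)a) T_{n-k}(w₃d-1,χ) w₂^{n-k} w₃^k`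
is invariant under all six permutations of `(w₁, w₂, w₃)` (all odd). -/
theorem stmt_4 (d : ℕ) (hd : Odd d) (hd0 : 0 < d) (χ : ℤ → ℂ)
    (hper : ∀ a : ℤ, χ (a + d) = χ a)
    (hmul : ∀ a b : ℤ, χ (a * b) = χ a * χ b) (hone : χ 1 = 1)
    (hvan : ∀ a : ℤ, 1 < Int.gcd a d → χ a = 0)
    (E : ℕ → ℂ → ℂ) (hE : IsGenEuler d χ E)
    (w : Fin 3 → ℕ) (hw : ∀ i, 0 < w i) (hwodd : ∀ i, Odd (w i))
    (y1 : ℂ) (n : ℕ) (σ : Equiv.Perm (Fin 3)) :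
    ((w (σ 0) : ℂ) ^ n * ∑ k ∈ range (n + 1),
      (n.choose k : ℂ) *
        (∑ a ∈ range (w (σ 0) * d), (-1 : ℂ) ^ a * χ (a : ℤ) *
          E k ((w (σ 1) : ℂ) * y1 + (w (σ 1) : ℂ) / (w (σ 0) : ℂ) * (a : ℂ))) *
        altPowSum χ (n - k) (w (σ 2) * d - 1) *
        (w (σ 1) : ℂ) ^ (n - k) * (w (σ 2) : ℂ) ^ k)
    = (w 0 : ℂ) ^ n * ∑ k ∈ range (n + 1),
      (n.choose k : ℂ) *
        (∑ a ∈ range (w 0 * d), (-1 : ℂ) ^ a * χ (a : ℤ) *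
          E k ((w 1 : ℂ) * y1 + (w 1 : ℂ) / (w 0 : ℂ) * (a : ℂ))) *
        altPowSum χ (n - k) (w 2 * d - 1) *
        (w 1 : ℂ) ^ (n - k) * (w 2 : ℂ) ^ k :=
  stmt_4_general d hd χ hper E hE w hwodd y1 n σ
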